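/- arXiv:1411.6152 — 2 statements merged into one kernel-verified Lean document; each statement's English description precedes it below -/
import Mathlib

section
/- For every α > 0, σ > 0 and μ ∈ ℝ, one has sup_{z ∈ E_{1+ασ}} |f_{σ,μ}(z)| ≤ e^{α²}, i.e. the modulus of the Gaussian function on the Bernstein ellipse with parameter χ = 1 + ασ is at most e^{α²}. -/
/-- The closed Bernstein ellipse region with parameter `χ`: the region bounded by the
ellipse with foci `±1` and half-axes `a = (χ²+1)/(2χ)`, `b = (χ²-1)/(2χ)`. -/
noncomputable def bernsteinEllipse (χ : ℝ) : Set ℂ :=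
  {z : ℂ | z.re ^ 2 / ((χ ^ 2 + 1) / (2 * χ)) ^ 2
    + z.im ^ 2 / ((χ ^ 2 - 1) / (2 * χ)) ^ 2 ≤ 1}

/-- Best approximation error of `f` on `[-1,1]` by real polynomials of degree ≤ `k`. -/
noncomputable def approxError (f : ℝ → ℝ) (k : ℕ) : ℝ :=
  sInf {e : ℝ | ∃ p : Polynomial ℝ, p.natDegree ≤ k ∧
    e = ⨆ x : Set.Icc (-1 : ℝ) 1, |f x.1 - p.eval x.1|}

/-- The Gaussian function `f_{σ,μ}(z) = exp (-(z-μ)²/σ²)` on `ℂ`. -/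
noncomputable def gaussFun (σ μ : ℝ) (z : ℂ) : ℂ :=
  Complex.exp (-(z - (μ : ℂ)) ^ 2 / (σ : ℂ) ^ 2)


/-! On the Bernstein ellipse `E_χ` the imaginary part is bounded by the minor half-axis
`(χ² - 1)/(2χ)`, which never exceeds `χ - 1`. Since `|exp (-(z - μ)²/σ²)| = exp (((Im z)² - (Re z - μ)²)/σ²)
≤ exp ((Im z)²/σ²)`, for `χ = 1 + ασ` this gives the bound `exp ((ασ)²/σ²) = exp α²`. -/

lemma norm_gaussFun (σ μ : ℝ) (z : ℂ) :
    ‖gaussFun σ μ z‖ = Real.exp ((z.im ^ 2 - (z.re - μ) ^ 2) / σ ^ 2) := by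
  have hσ : (σ : ℂ) ^ 2 = ((σ ^ 2 : ℝ) : ℂ) := by push_cast; rfl
  rw [gaussFun, Complex.norm_exp, hσ, Complex.div_ofReal_re]
  congr 2
  simp only [Complex.neg_re, pow_two, Complex.mul_re, Complex.sub_re, Complex.sub_im,
    Complex.ofReal_re, Complex.ofReal_im]
  ring

lemma norm_gaussFun_le (σ μ : ℝ) (z : ℂ) : ‖gaussFun σ μ z‖ ≤ Real.exp (z.im ^ 2 / σ ^ 2) := by
  rw [norm_gaussFun, Real.exp_le_exp]
  gcongr
  linarith [sq_nonneg (z.re - μ)]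

lemma im_sq_le_of_mem_bernsteinEllipse {χ : ℝ} (hχ : 1 < χ) {z : ℂ}
    (hz : z ∈ bernsteinEllipse χ) : z.im ^ 2 ≤ ((χ ^ 2 - 1) / (2 * χ)) ^ 2 := by
  have hb : 0 < (χ ^ 2 - 1) / (2 * χ) := div_pos (by nlinarith) (by linarith)
  have hre : 0 ≤ z.re ^ 2 / ((χ ^ 2 + 1) / (2 * χ)) ^ 2 := by positivity
  rw [← div_le_one (by positivity)]
  exact le_of_add_le_of_nonneg_right hz hre

lemma sq_sub_one_div_two_mul_le_sub_one {χ : ℝ} (hχ : 0 < χ) : (χ ^ 2 - 1) / (2 * χ) ≤ χ - 1 := by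
  rw [div_le_iff₀ (by positivity)]
  nlinarith [sq_nonneg (χ - 1)]

lemma im_sq_le_sub_one_sq_of_mem_bernsteinEllipse {χ : ℝ} (hχ : 1 < χ) {z : ℂ}
    (hz : z ∈ bernsteinEllipse χ) : z.im ^ 2 ≤ (χ - 1) ^ 2 := by
  have hb : 0 ≤ (χ ^ 2 - 1) / (2 * χ) := div_nonneg (by nlinarith) (by linarith)
  calc z.im ^ 2 ≤ ((χ ^ 2 - 1) / (2 * χ)) ^ 2 := im_sq_le_of_mem_bernsteinEllipse hχ hz
    _ ≤ (χ - 1) ^ 2 := by gcongr; exact sq_sub_one_div_two_mul_le_sub_one (by linarith)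

/-- The modulus of the Gaussian `f_{σ,μ}` on the Bernstein ellipse with parameter
`χ = 1 + ασ` is at most `e^{α²}`. -/
theorem gauss_sup_on_ellipse_le (α σ μ : ℝ) (hα : 0 < α) (hσ : 0 < σ) :
    (⨆ z : bernsteinEllipse (1 + α * σ), ‖gaussFun σ μ z‖) ≤
      Real.exp (α ^ 2) := by
  refine Real.iSup_le (fun ⟨z, hz⟩ ↦ (norm_gaussFun_le σ μ z).trans ?_) (Real.exp_pos _).le
  have him : z.im ^ 2 ≤ (α * σ) ^ 2 := by
    simpa using im_sq_le_sub_one_sq_of_mem_bernsteinEllipse (by nlinarith [mul_pos hα hσ]) hz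
  rw [Real.exp_le_exp, div_le_iff₀ (by positivity)]
  linarith
end

section
/- Let A, B ∈ ℂ^{n×n} be Hermitian matrices such that the graph induced by B is a spanning subgraph of the graph G_A induced by A (i.e. B_{il} ≠ 0 implies A_{il} ≠ 0 for all distinct i, l), and let d be the geodesic distance in G_A valued in ℕ∞. Fix an index j and a positive integer m, and assume A_{il} = B_{il} for all i, l with d(j,i) ≤ m and d(j,l) ≤ m. Then for every integer k with 1 ≤ k ≤ m, one has (A^k)_{il} = (B^k)_{il} for all i, l with d(j,i) ≤ m − k + 1 and d(j,l) ≤ m − k + 1. -/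
/-- The simple graph induced by a Hermitian matrix: distinct `i`, `j` are adjacent
iff `A i j ≠ 0`. -/
def inducedGraph {n : ℕ} (A : Matrix (Fin n) (Fin n) ℂ) (hA : A.IsHermitian) :
    SimpleGraph (Fin n) where
  Adj i j := i ≠ j ∧ A i j ≠ 0
  symm := ⟨by
    rintro i j ⟨hij, hAij⟩
    refine ⟨hij.symm, fun h => hAij ?_⟩
    rw [← hA.apply i j, h, star_zero]⟩
  loopless := ⟨fun i h => h.1 rfl⟩

/-- Continuous functional calculus for a Hermitian matrix via the spectral theorem:
`g(A) = X g(Λ) X*`. -/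
noncomputable def hermFC {n : ℕ} (g : ℝ → ℝ) {A : Matrix (Fin n) (Fin n) ℂ}
    (hA : A.IsHermitian) : Matrix (Fin n) (Fin n) ℂ :=
  (hA.eigenvectorUnitary : Matrix (Fin n) (Fin n) ℂ) *
    Matrix.diagonal (fun i => (g (hA.eigenvalues i) : ℂ)) *
    (star hA.eigenvectorUnitary : Matrix (Fin n) (Fin n) ℂ)


namespace Matrix

variable {ι α : Type*} [Semiring α] {G : SimpleGraph ι}

def IsLocal (G : SimpleGraph ι) (A : Matrix ι ι α) : Prop :=
  ∀ i l, A i l ≠ 0 → G.edist i l ≤ 1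

lemma isLocal_of_adj {A : Matrix ι ι α} (h : ∀ i l, i ≠ l → A i l ≠ 0 → G.Adj i l) :
    A.IsLocal G := by
  intro i l hil
  rw [SimpleGraph.edist_le_one_iff_adj_or_eq]
  by_cases hne : i = l
  · exact Or.inr hne
  · exact Or.inl (h i l hne hil)

-- Only terms `(A ^ (k+1)) i p * A p l` with `p` a neighbour of `l` contribute, and such `p`
-- lie one step further out, in a ball that is still covered by the induction hypothesis.
theorem pow_succ_apply_eq_of_agree_on_ball [Fintype ι] [DecidableEq ι] {A B : Matrix ι ι α}
    (hA : A.IsLocal G) (hB : B.IsLocal G) (j : ι) (k r : ℕ)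
    (hagree : ∀ i l, G.edist j i ≤ (r + k : ℕ) → G.edist j l ≤ (r + k : ℕ) → A i l = B i l)
    (i l : ι) (hi : G.edist j i ≤ r) (hl : G.edist j l ≤ r) :
    (A ^ (k + 1)) i l = (B ^ (k + 1)) i l := by
  induction k generalizing r l with
  | zero => simpa using hagree i l hi hl
  | succ k ih =>
    have hagree' : ∀ i l, G.edist j i ≤ (r + 1 + k : ℕ) → G.edist j l ≤ (r + 1 + k : ℕ) →
        A i l = B i l := by
      simpa only [Nat.add_right_comm r 1 k, Nat.add_assoc r k 1] using hagree
    have mono : ∀ {s t : ℕ} {v : ι}, s ≤ t → G.edist j v ≤ s → G.edist j v ≤ t :=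
      fun hst hv => hv.trans (by exact_mod_cast hst)
    rw [pow_succ, pow_succ B, mul_apply, mul_apply]
    refine Finset.sum_congr rfl fun p _ => ?_
    by_cases hp : G.edist j p ≤ (r + 1 : ℕ)
    · rw [ih (r + 1) hagree' p (mono (by omega) hi) hp,
        hagree' p l (mono (by omega) hp) (mono (by omega) hl)]
    · have entry_eq_zero : ∀ {C : Matrix ι ι α}, C.IsLocal G → C p l = 0 := fun hC => by
        by_contra hne
        refine hp ?_
        calc G.edist j p ≤ G.edist j l + G.edist l p := G.edist_triangle
          _ ≤ r + 1 := add_le_add hl (G.edist_comm ▸ hC p l hne)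
          _ = (r + 1 : ℕ) := by push_cast; rfl
      rw [entry_eq_zero hA, entry_eq_zero hB, mul_zero, mul_zero]

end Matrix

theorem pow_entry_eq_of_agree_on_ball_general {n : ℕ} (A B : Matrix (Fin n) (Fin n) ℂ)
    (hA : A.IsHermitian)
    (hsub : ∀ i l : Fin n, i ≠ l → B i l ≠ 0 → A i l ≠ 0)
    (j : Fin n) (m : ℕ)
    (hagree : ∀ i l : Fin n, (inducedGraph A hA).edist j i ≤ (m : ℕ∞) →
      (inducedGraph A hA).edist j l ≤ (m : ℕ∞) → A i l = B i l)
    (k : ℕ) (hkm : k ≤ m) :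
    ∀ i l : Fin n, (inducedGraph A hA).edist j i ≤ ((m - k + 1 : ℕ) : ℕ∞) →
      (inducedGraph A hA).edist j l ≤ ((m - k + 1 : ℕ) : ℕ∞) →
      (A ^ k) i l = (B ^ k) i l := by
  cases k with
  | zero => simp
  | succ k =>
    have hA_local : A.IsLocal (inducedGraph A hA) :=
      Matrix.isLocal_of_adj fun _ _ hne h => ⟨hne, h⟩
    have hB_local : B.IsLocal (inducedGraph A hA) :=
      Matrix.isLocal_of_adj fun i l hne h => ⟨hne, hsub i l hne h⟩
    have hm : m - (k + 1) + 1 + k = m := by omega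
    exact Matrix.pow_succ_apply_eq_of_agree_on_ball hA_local hB_local j k _ (by rwa [hm])

/-- If `A` and `B` agree on the ball of geodesic radius `m` around `j` (distances taken
in the graph induced by `A`, of which the graph induced by `B` is a spanning subgraph),
then `A^k` and `B^k` agree on the ball of radius `m - k + 1` for `1 ≤ k ≤ m`. -/
theorem pow_entry_eq_of_agree_on_ball {n : ℕ} (A B : Matrix (Fin n) (Fin n) ℂ)
    (hA : A.IsHermitian) (hB : B.IsHermitian)
    (hsub : ∀ i l : Fin n, i ≠ l → B i l ≠ 0 → A i l ≠ 0)
    (j : Fin n) (m : ℕ) (hm : 0 < m)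
    (hagree : ∀ i l : Fin n, (inducedGraph A hA).edist j i ≤ (m : ℕ∞) →
      (inducedGraph A hA).edist j l ≤ (m : ℕ∞) → A i l = B i l)
    (k : ℕ) (hk1 : 1 ≤ k) (hkm : k ≤ m) :
    ∀ i l : Fin n, (inducedGraph A hA).edist j i ≤ ((m - k + 1 : ℕ) : ℕ∞) →
      (inducedGraph A hA).edist j l ≤ ((m - k + 1 : ℕ) : ℕ∞) →
      (A ^ k) i l = (B ^ k) i l :=
  pow_entry_eq_of_agree_on_ball_general A B hA hsub j m hagree k hkm
end
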